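/- Let m, r ∈ Z^d with N-optimal presentations m = [v_i; p_i] and r = [w_i; q_i], and suppose m has a cut at ℓ for parameters (N, θ', μ', τ), i.e. p_ℓ < μ' N^τ and p_{ℓ+1} > θ' N^{4dτ}. If allowable parameters θ < θ', μ > μ' satisfy |r - m| < min(κ^{-1}(μ-μ')N^{τ-1}, κ^{-1}(θ'-θ)N^{4dτ-1}), then: (1) r has a cut at the same ℓ for parameters (N, θ, μ, τ); (2) the spans ⟨w_1,...,w_ℓ⟩ and ⟨v_1,...,v_ℓ⟩ coincide; (3) [w_i; q_i]_ℓ is the N-optimal presentation of the translated subspace [v_i; p_i]_ℓ + (r - m). -/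

import Mathlib

/-- Integer inner product on `ℤ^d`. -/
def dotZ {d : ℕ} (v x : Fin d → ℤ) : ℤ := ∑ i, v i * x i

/-- Euclidean norm of an integer vector. -/
noncomputable def enormZ {d : ℕ} (v : Fin d → ℤ) : ℝ :=
  Real.sqrt (∑ i, ((v i : ℝ)) ^ 2)

/-- `v ∈ B_N`: nonzero integer vector of Euclidean norm `< κN`. -/
def inBall (d : ℕ) (κ N : ℝ) (v : Fin d → ℤ) : Prop :=
  v ≠ 0 ∧ enormZ v < κ * N

/-- Lexicographic strict order on integer tuples. -/
def lexLt {ι : Type*} [LT ι] (x y : ι → ℤ) : Prop :=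
  ∃ i, (∀ j, j < i → x j = y j) ∧ x i < y i

/-- The sign-lexicographic order. -/
def slex {ι : Type*} [LT ι] (x y : ι → ℤ) : Prop :=
  lexLt (fun i => |x i|) (fun i => |y i|) ∨ ((∀ i, |x i| = |y i|) ∧ lexLt y x)

/-- The display vector `(p₁,…,p_l; v₁,…,v_l)` of a presentation, used for the
sign-lexicographic comparison of presentations. -/
def presVec (d l : ℕ) (p : ℕ → ℕ) (v : ℕ → Fin d → ℤ) :
    Lex (Fin l ⊕ Lex (Fin l × Fin d)) → ℤ :=
  fun i => Sum.elim (fun a : Fin l => (p a.1 : ℤ))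
    (fun b : Lex (Fin l × Fin d) => v (ofLex b).1.1 (ofLex b).2) (ofLex i)

/-- `(p, v)` is a presentation of `A ⊆ ℤ^d` by `l` independent equations
`(vᵢ, x) = pᵢ` with `vᵢ ∈ B_N`. -/
def IsPresOf (d l : ℕ) (κ N : ℝ) (A : Set (Fin d → ℤ))
    (p : ℕ → ℕ) (v : ℕ → Fin d → ℤ) : Prop :=
  (∀ i < l, inBall d κ N (v i)) ∧
  LinearIndependent ℝ (fun i : Fin l => fun j => ((v i.1 j : ℝ))) ∧
  A = {x | ∀ i < l, dotZ (v i) x = (p i : ℤ)}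

/-- `(p, v)` is the `N`-optimal presentation of `A`: minimal in the
sign-lexicographic order among all presentations. -/
def IsOptPres (d l : ℕ) (κ N : ℝ) (A : Set (Fin d → ℤ))
    (p : ℕ → ℕ) (v : ℕ → Fin d → ℤ) : Prop :=
  IsPresOf d l κ N A p v ∧
  ∀ q w, IsPresOf d l κ N A q w →
    presVec d l p v = presVec d l q w ∨ slex (presVec d l p v) (presVec d l q w)

/-- A presentation (indexed 1-based via `p (i-1)`, so `p_ℓ = p (ℓ - 1)`) has a cut at
`ℓ` for the parameters `(N, θ, μ, τ)`: `p_ℓ < μ N^τ` and `p_{ℓ+1} > θ N^{4dτ}`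
(with the conventions `p₀ = 0`, `p_{d+1} = ∞`). -/
def HasCutAt (d : ℕ) (N θ μ τ : ℝ) (p : ℕ → ℕ) (ℓ : ℕ) : Prop :=
  ℓ ≤ d ∧ (ℓ = 0 ∨ ((p (ℓ - 1) : ℝ)) < μ * N ^ τ) ∧
    (ℓ = d ∨ θ * N ^ (4 * (d : ℝ) * τ) < (p ℓ : ℝ))

/-- The parameters `(N, θ, μ, τ)` are allowable, together with the defining relations
among the fixed constants `τ₀, τ₁, c, C, N₀` of the paper. -/
def Allowable (d n : ℕ) (κ τ0 τ1 cc CC N0 N θ μ τ : ℝ) : Prop :=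
  max ((d : ℝ) ^ 2 + n) 12 < τ0 ∧
  τ1 = (4 * (d : ℝ)) ^ (d + 1) * (τ0 + 1) ∧
  0 < cc ∧ cc ≤ 1 / 2 ∧ 4 ≤ CC ∧
  N0 = (Nat.factorial (d + 1) : ℝ) * κ ^ (d + 1) * CC / cc ∧
  1 ≤ κ ∧ τ0 ≤ τ ∧ τ ≤ τ1 / (4 * d) ∧
  cc < θ ∧ θ < CC ∧ cc < μ ∧ μ < CC ∧ N0 < N

/-!
Cauchy–Schwarz bounds `|(v, r) - (v, m)|` for `v ∈ B_N` by `(μ - μ') N^τ` and by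
`(θ' - θ) N^{4dτ}`. Optimality of the presentation of a point gives `p_j ≤ |(u, m)|` whenever
`u ∈ B_N` lies outside `⟨v_1, …, v_{j-1}⟩`, since otherwise `u` could replace `v_j`.
For `i ≤ ℓ` some `v_k` with `k ≤ ℓ` lies outside `⟨w_1, …, w_{i-1}⟩`, so
`q_i ≤ |(v_k, r)| < p_k + (μ - μ') N^τ < μ N^τ`; and every `u ∈ B_N` outside
`V = ⟨v_1, …, v_ℓ⟩` has `|(u, r)| > p_{ℓ+1} - (θ' - θ) N^{4dτ} > θ N^{4dτ} ≥ μ N^τ`.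
Hence `w_1, …, w_ℓ ∈ V`, the spans agree and the cut persists. Finally, the first `ℓ` equations
of the optimal presentation of `r` are optimal for the affine sublattice they cut out: the
integer vectors orthogonal to `V` span `V^⊥`, so the vectors of any competing presentation lie
in `V`, and completing them by `w_{ℓ+1}, …, w_d` gives a competitor for `r`.
-/

open Submodule Set Matrix

section LinearAlgebra

variable {K V : Type*} [Field K] [AddCommGroup V] [Module K V]

theorem linearIndependent_update_of_notMem_span {f : ℕ → V} {k : ℕ}
    (hf : LinearIndependent K fun i : Fin k => f i) {x : V}
    (hx : x ∉ span K (range fun i : Fin k => f i)) :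
    LinearIndependent K fun i : Fin (k + 1) => Function.update f k x i := by
  have h : (fun i : Fin (k + 1) => Function.update f k x i) =
      Fin.snoc (fun i : Fin k => f i) x := by
    funext i
    refine Fin.lastCases ?_ (fun j => ?_) i
    · simp
    · simp [Function.update_of_ne (Nat.ne_of_lt j.2)]
  rw [h]
  exact linearIndependent_finSnoc.2 ⟨hf, hx⟩

theorem LinearIndependent.fin_prefix {f : ℕ → V} {l k : ℕ}
    (hf : LinearIndependent K fun i : Fin l => f i) (hk : k ≤ l) :
    LinearIndependent K fun i : Fin k => f i :=
  hf.comp (Fin.castLE hk) (Fin.castLE_injective hk)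

theorem LinearIndependent.notMem_span_prefix {f : ℕ → V} {l : ℕ}
    (hf : LinearIndependent K fun i : Fin l => f i) {a k : ℕ} (ha : a < l) (hka : k ≤ a) :
    f a ∉ span K (range fun i : Fin k => f i) := by
  have hrange : (range fun i : Fin k => f i) =
      (fun i : Fin l => f i) '' range (Fin.castLE (hka.trans ha.le)) := by
    rw [← range_comp]; rfl
  rw [hrange]
  refine hf.notMem_span_image (x := ⟨a, ha⟩) ?_
  rintro ⟨b, hb⟩
  have := congrArg Fin.val hb
  simp at this
  omega

variable [FiniteDimensional K V]

theorem exists_notMem_span_of_lt {ι : Type*} [Fintype ι] {f : ι → V} {g : ℕ → V} {k : ℕ}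
    (hf : LinearIndependent K f) (hk : k < Fintype.card ι) :
    ∃ i, f i ∉ span K (range fun i : Fin k => g i) := by
  by_contra! h
  have := finrank_mono (span_le.2 (range_subset_iff.2 h))
  rw [finrank_span_eq_card hf] at this
  have := finrank_range_le_card (R := K) fun i : Fin k => g i
  simp only [Fintype.card_fin, Set.finrank] at this
  omega

theorem linearIndependent_ite_of_span_le {f g : ℕ → V} {ℓ d : ℕ} (hd : Module.finrank K V = d)
    (hℓ : ℓ ≤ d)
    (hf : LinearIndependent K fun i : Fin d => f i)
    (hfg : span K (range fun i : Fin ℓ => f i) ≤ span K (range fun i : Fin ℓ => g i)) :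
    LinearIndependent K fun i : Fin d => if (i : ℕ) < ℓ then g i else f i := by
  refine linearIndependent_of_top_le_span_of_card_eq_finrank ?_ (by simp [hd])
  rw [← hf.span_eq_top_of_card_eq_finrank' (by simp [hd]), span_le]
  rintro _ ⟨i, rfl⟩
  by_cases hi : (i : ℕ) < ℓ
  · refine hfg.trans (span_mono ?_) (subset_span ⟨⟨i, hi⟩, rfl⟩)
    rintro _ ⟨j, rfl⟩
    exact ⟨⟨j, by omega⟩, by simp⟩
  · exact subset_span ⟨i, by simp [hi]⟩

end LinearAlgebra

theorem dotProduct_eq_zero_of_mem_span {R n : Type*} [CommRing R] [Fintype n]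
    {S : Set (n → R)} {z : n → R} (hS : ∀ a ∈ S, a ⬝ᵥ z = 0) {a : n → R}
    (ha : a ∈ span R S) : a ⬝ᵥ z = 0 := by
  induction ha using Submodule.span_induction with
  | mem a ha => exact hS a ha
  | zero => exact zero_dotProduct z
  | add a b _ _ ha hb => rw [add_dotProduct, ha, hb, add_zero]
  | smul c a _ ha => rw [smul_dotProduct, ha, smul_zero]

section LexOrder

variable {α β γ δ : Type*} [LinearOrder α] [LinearOrder β] [LinearOrder γ] [LinearOrder δ]

theorem Sum.Lex.strictMono_map {f : α → γ} {g : β → δ} (hf : StrictMono f) (hg : StrictMono g) :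
    StrictMono (toLex ∘ Sum.map f g ∘ ofLex : α ⊕ₗ β → γ ⊕ₗ δ) := by
  rintro (a | a) (b | b) h
  · exact Sum.Lex.inl (hf (Sum.Lex.inl_lt_inl_iff.1 h))
  · exact Sum.Lex.sep _ _
  · exact absurd h Sum.lex_inr_inl
  · exact Sum.Lex.inr (hg (Sum.Lex.inr_lt_inr_iff.1 h))

theorem Prod.Lex.strictMono_map_fst {f : α → γ} (hf : StrictMono f) :
    StrictMono (toLex ∘ Prod.map f id ∘ ofLex : α ×ₗ β → γ ×ₗ β) := by
  intro a b h
  simp only [Function.comp_apply, Prod.Lex.toLex_lt_toLex, Prod.map_fst, Prod.map_snd, id]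
  rcases Prod.Lex.lt_iff.1 h with h | ⟨h1, h2⟩
  · exact Or.inl (hf h)
  · exact Or.inr ⟨congrArg f h1, h2⟩

end LexOrder

section SignLex

variable {ι κ : Type*} [LinearOrder ι] [LinearOrder κ]

theorem lexLt_comp {e : ι → κ} (he : StrictMono e) {x y : κ → ℤ}
    (hoff : ∀ k, x k ≠ y k → k ∈ Set.range e) (h : lexLt x y) : lexLt (x ∘ e) (y ∘ e) := by
  obtain ⟨k, hpre, hlt⟩ := h
  obtain ⟨i, rfl⟩ := hoff k hlt.ne
  exact ⟨i, fun j hj => hpre _ (he hj), hlt⟩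

theorem eq_or_slex_comp {e : ι → κ} (he : StrictMono e) {x y : κ → ℤ}
    (hoff : ∀ k, x k ≠ y k → k ∈ Set.range e) (h : x = y ∨ slex x y) :
    x ∘ e = y ∘ e ∨ slex (x ∘ e) (y ∘ e) := by
  rcases h with rfl | h | ⟨habs, h⟩
  · exact Or.inl rfl
  · refine Or.inr (Or.inl (lexLt_comp he (fun k hk => hoff k ?_) h))
    rintro hxy
    exact hk (by rw [hxy])
  · exact Or.inr (Or.inr ⟨fun i => habs (e i), lexLt_comp he (fun k hk => hoff k (Ne.symm hk)) h⟩)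

theorem not_eq_or_slex_of_abs_lt {x y : ι → ℤ} {i : ι} (hpre : ∀ j < i, x j = y j)
    (hi : |y i| < |x i|) : ¬(x = y ∨ slex x y) := by
  rintro (rfl | ⟨k, hk, hlt⟩ | ⟨habs, -⟩)
  · exact hi.ne rfl
  · rcases lt_trichotomy k i with hki | rfl | hik
    · exact hlt.ne (congrArg abs (hpre k hki))
    · exact hi.not_gt hlt
    · exact hi.ne (hk i hik).symm
  · exact hi.ne (habs i).symm

end SignLex

section IntegerVectors

variable {d : ℕ}

def castVec (v : Fin d → ℤ) : Fin d → ℝ := fun j => (v j : ℝ)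

theorem dotZ_eq_dotProduct (v x : Fin d → ℤ) : dotZ v x = v ⬝ᵥ x := rfl

theorem dotZ_add (v x y : Fin d → ℤ) : dotZ v (x + y) = dotZ v x + dotZ v y :=
  dotProduct_add v x y

theorem dotZ_sub (v x y : Fin d → ℤ) : dotZ v (x - y) = dotZ v x - dotZ v y :=
  dotProduct_sub v x y

theorem castVec_dotProduct (v x : Fin d → ℤ) : castVec v ⬝ᵥ castVec x = (dotZ v x : ℝ) := by
  simp [castVec, dotZ, dotProduct]

theorem castVec_single (j : Fin d) : castVec (Pi.single j 1) = Pi.single j (1 : ℝ) := by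
  funext i
  simp [castVec, Pi.single_apply]

theorem castVec_sum_smul {ι : Type*} [Fintype ι] (a : ι → ℤ) (G : ι → Fin d → ℤ) :
    castVec (∑ i, a i • G i) = ∑ i, (a i : ℝ) • castVec (G i) := by
  funext j
  simp [castVec, Finset.sum_apply]

theorem abs_dotZ_le (v w : Fin d → ℤ) : |(dotZ v w : ℝ)| ≤ enormZ v * enormZ w := by
  rw [enormZ, enormZ, ← Real.sqrt_mul (Finset.sum_nonneg fun i _ => sq_nonneg _)]
  apply Real.abs_le_sqrt
  push_cast [dotZ]
  exact Finset.sum_mul_sq_le_sq_mul_sq _ _ _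

theorem dotZ_eq_of_mem_span {v : ℕ → Fin d → ℤ} {ℓ : ℕ} {w x y : Fin d → ℤ}
    (hw : castVec w ∈ span ℝ (range fun i : Fin ℓ => castVec (v i)))
    (hxy : ∀ i < ℓ, dotZ (v i) x = dotZ (v i) y) : dotZ w x = dotZ w y := by
  have hgen : ∀ a ∈ range (fun i : Fin ℓ => castVec (v i)), a ⬝ᵥ castVec (x - y) = 0 := by
    rintro _ ⟨i, rfl⟩
    rw [castVec_dotProduct, dotZ_sub, hxy i i.2, sub_self, Int.cast_zero]
  have := dotProduct_eq_zero_of_mem_span hgen hw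
  rw [castVec_dotProduct, dotZ_sub] at this
  exact sub_eq_zero.1 (by exact_mod_cast this)

theorem setOf_dotZ_eq_of_span_eq {v w : ℕ → Fin d → ℤ} {ℓ : ℕ}
    (hspan : span ℝ (range fun i : Fin ℓ => castVec (w i)) =
      span ℝ (range fun i : Fin ℓ => castVec (v i))) (y : Fin d → ℤ) :
    {x | ∀ i < ℓ, dotZ (w i) x = dotZ (w i) y} = {x | ∀ i < ℓ, dotZ (v i) x = dotZ (v i) y} := by
  ext x
  refine ⟨fun hx i hi => dotZ_eq_of_mem_span ?_ hx, fun hx i hi => dotZ_eq_of_mem_span ?_ hx⟩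
  · rw [hspan]; exact subset_span ⟨⟨i, hi⟩, rfl⟩
  · rw [← hspan]; exact subset_span ⟨⟨i, hi⟩, rfl⟩

theorem image_add_sub_setOf_dotZ {v w : ℕ → Fin d → ℤ} {p q : ℕ → ℕ} {ℓ : ℕ}
    (hspan : span ℝ (range fun i : Fin ℓ => castVec (w i)) =
      span ℝ (range fun i : Fin ℓ => castVec (v i)))
    {m r : Fin d → ℤ} (hm : ∀ i < ℓ, dotZ (v i) m = p i) (hr : ∀ i < ℓ, dotZ (w i) r = q i) :
    (fun x => x + (r - m)) '' {x | ∀ i < ℓ, dotZ (v i) x = p i} =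
      {x | ∀ i < ℓ, dotZ (w i) x = q i} := by
  ext x
  have hx := congrArg (x ∈ ·) (setOf_dotZ_eq_of_span_eq hspan r)
  simp only [mem_ofPred_eq, eq_iff_iff] at hx
  rw [image_add_right, mem_preimage, mem_ofPred_eq, mem_ofPred_eq]
  calc (∀ i < ℓ, dotZ (v i) (x + -(r - m)) = p i) ↔ ∀ i < ℓ, dotZ (v i) x = dotZ (v i) r :=
        forall₂_congr fun i hi => by
          rw [← sub_eq_add_neg, dotZ_sub, dotZ_sub, hm i hi]; omega
    _ ↔ ∀ i < ℓ, dotZ (w i) x = q i := hx.symm.trans (forall₂_congr fun i hi => by rw [hr i hi])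

theorem eq_of_forall_dotZ_eq {v : ℕ → Fin d → ℤ}
    (hv : LinearIndependent ℝ fun i : Fin d => castVec (v i)) {x y : Fin d → ℤ}
    (hxy : ∀ i < d, dotZ (v i) x = dotZ (v i) y) : x = y := by
  have htop := hv.span_eq_top_of_card_eq_finrank' (by simp)
  funext j
  have := dotZ_eq_of_mem_span (w := Pi.single j 1) (htop ▸ mem_top) hxy
  simpa [dotZ_eq_dotProduct] using this

theorem exists_extension_by_single {g : ℕ → Fin d → ℤ} {k : ℕ} (hk : k ≤ d)
    (hg : LinearIndependent ℝ fun i : Fin k => castVec (g i)) :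
    ∃ G : ℕ → Fin d → ℤ, (∀ i < k, G i = g i) ∧
      (∀ i, k ≤ i → i < d → ∃ j, G i = Pi.single j 1) ∧
      LinearIndependent ℝ fun i : Fin d => castVec (G i) := by
  induction h : d - k generalizing g k with
  | zero =>
    obtain rfl : k = d := by omega
    exact ⟨g, fun _ _ => rfl, fun i hki hid => absurd hki (by omega), hg⟩
  | succ t ih =>
    have hstd : LinearIndependent ℝ fun j : Fin d => castVec (Pi.single j (1 : ℤ)) := by
      convert (Pi.basisFun ℝ (Fin d)).linearIndependent with j
      simp [castVec_single]
    obtain ⟨j, hj⟩ := exists_notMem_span_of_lt (g := fun i => castVec (g i)) (k := k) hstd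
      (by rw [Fintype.card_fin]; omega)
    have hg' : LinearIndependent ℝ fun i : Fin (k + 1) =>
        castVec (Function.update g k (Pi.single j 1) i) := by
      simp only [Function.apply_update (fun _ => castVec)]
      exact linearIndependent_update_of_notMem_span (f := fun i => castVec (g i)) hg hj
    obtain ⟨G, hGg, hGsingle, hG⟩ := ih (k := k + 1) (by omega) hg' (by omega)
    refine ⟨G, fun i hi => by simp [hGg i (by omega), hi.ne], fun i hki hid => ?_, hG⟩
    rcases hki.eq_or_lt with rfl | hki
    · exact ⟨j, by simp [hGg k (by omega)]⟩
    · exact hGsingle i hki hid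

theorem det_ne_zero_of_linearIndependent {M : Matrix (Fin d) (Fin d) ℤ}
    (hM : LinearIndependent ℝ fun i => castVec (M i)) : M.det ≠ 0 := by
  have hunit : IsUnit (M.map ((↑) : ℤ → ℝ)) := linearIndependent_rows_iff_isUnit.1 hM
  rw [isUnit_iff_isUnit_det, isUnit_iff_ne_zero, ← Int.cast_det] at hunit
  exact_mod_cast hunit

theorem castVec_mem_span_of_forall_dotZ_eq_zero {v : ℕ → Fin d → ℤ} {ℓ : ℕ} (hℓ : ℓ ≤ d)
    (hv : LinearIndependent ℝ fun i : Fin ℓ => castVec (v i)) {u : Fin d → ℤ}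
    (hu : ∀ z, (∀ i < ℓ, dotZ (v i) z = 0) → dotZ u z = 0) :
    castVec u ∈ span ℝ (range fun i : Fin ℓ => castVec (v i)) := by
  obtain ⟨G, hGv, -, hG⟩ := exists_extension_by_single hℓ hv
  let M : Matrix (Fin d) (Fin d) ℤ := Matrix.of fun i => G i
  have hdet : M.det ≠ 0 := det_ne_zero_of_linearIndependent hG
  -- the columns of `adj M` past `ℓ` are orthogonal to the first `ℓ` rows of `M`
  have ha : ∀ t : Fin d, ℓ ≤ t → (u ᵥ* M.adjugate) t = 0 := by
    intro t ht
    refine hu (fun j => M.adjugate j t) fun i hi => ?_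
    have := congrFun (congrFun (mul_adjugate M) ⟨i, by omega⟩) t
    rw [mul_apply, Matrix.smul_apply, one_apply_ne (Fin.ne_of_val_ne (show i ≠ t by omega)),
      smul_zero] at this
    rw [← hGv i hi]
    exact this
  have hsum : (M.det : ℝ) • castVec u = ∑ t, ((u ᵥ* M.adjugate) t : ℝ) • castVec (M t) := by
    rw [← castVec_sum_smul _ M, ← vecMul_eq_sum, vecMul_vecMul, adjugate_mul, vecMul_smul,
      vecMul_one]
    funext j
    simp [castVec]
  rw [← smul_mem_iff _ (Int.cast_ne_zero.2 hdet : (M.det : ℝ) ≠ 0), hsum]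
  refine sum_mem fun t _ => ?_
  by_cases ht : (t : ℕ) < ℓ
  · rw [show M t = v t from hGv t ht]
    exact smul_mem _ _ (subset_span ⟨⟨t, ht⟩, rfl⟩)
  · rw [ha t (not_lt.1 ht), Int.cast_zero, zero_smul]
    exact zero_mem _

end IntegerVectors

section Presentations

variable {d : ℕ} {κ N : ℝ}

theorem IsPresOf.dotZ_eq {l : ℕ} {A : Set (Fin d → ℤ)} {p : ℕ → ℕ} {v : ℕ → Fin d → ℤ}
    (h : IsPresOf d l κ N A p v) {x : Fin d → ℤ} (hx : x ∈ A) :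
    ∀ i < l, dotZ (v i) x = p i := by
  rw [h.2.2] at hx
  exact hx

theorem IsPresOf.linearIndependent {l : ℕ} {A : Set (Fin d → ℤ)} {p : ℕ → ℕ}
    {v : ℕ → Fin d → ℤ} (h : IsPresOf d l κ N A p v) :
    LinearIndependent ℝ fun i : Fin l => castVec (v i) :=
  h.2.1

theorem IsOptPres.isPresOf {l : ℕ} {A : Set (Fin d → ℤ)} {p : ℕ → ℕ} {v : ℕ → Fin d → ℤ}
    (h : IsOptPres d l κ N A p v) : IsPresOf d l κ N A p v :=
  h.1

theorem inBall_neg {v : Fin d → ℤ} : inBall d κ N (-v) ↔ inBall d κ N v := by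
  simp [inBall, enormZ]

theorem inBall_single (hκN : 1 < κ * N) (j : Fin d) : inBall d κ N (Pi.single j 1) := by
  refine ⟨by simp, ?_⟩
  have : (∑ i, ((Pi.single j (1 : ℤ) : Fin d → ℤ) i : ℝ) ^ 2) = 1 := by
    simp [Pi.single_apply]
  rwa [enormZ, this, Real.sqrt_one]

theorem singleton_eq_setOf_dotZ {G : ℕ → Fin d → ℤ}
    (hG : LinearIndependent ℝ fun i : Fin d => castVec (G i)) {q : ℕ → ℕ} {m : Fin d → ℤ}
    (hm : ∀ i < d, dotZ (G i) m = q i) : {m} = {x | ∀ i < d, dotZ (G i) x = q i} := by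
  ext x
  refine ⟨by rintro rfl; exact hm, fun hx => ?_⟩
  exact eq_of_forall_dotZ_eq hG fun i hi => (hx i hi).trans (hm i hi).symm

theorem isPresOf_singleton {G : ℕ → Fin d → ℤ} (hG : ∀ i < d, inBall d κ N (G i))
    (hGli : LinearIndependent ℝ fun i : Fin d => castVec (G i)) (m : Fin d → ℤ) :
    IsPresOf d d κ N {m} (fun i => (|dotZ (G i) m|).toNat)
      (fun i => if dotZ (G i) m < 0 then -G i else G i) := by
  have hdot : ∀ i, dotZ (if dotZ (G i) m < 0 then -G i else G i) m = |dotZ (G i) m| := by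
    intro i
    split_ifs with h
    · rw [abs_of_neg h, dotZ_eq_dotProduct, neg_dotProduct]; rfl
    · rw [abs_of_nonneg (not_lt.1 h)]
  have hli : LinearIndependent ℝ fun i : Fin d =>
      castVec (if dotZ (G i) m < 0 then -G i else G i) := by
    convert hGli.units_smul fun i => if dotZ (G i) m < 0 then -1 else 1 using 1
    funext i j
    by_cases h : dotZ (G i) m < 0 <;> simp [castVec, h]
  refine ⟨fun i hi => ?_, hli, ?_⟩
  · dsimp only
    split_ifs
    exacts [inBall_neg.2 (hG i hi), hG i hi]
  · refine singleton_eq_setOf_dotZ (G := fun i => if dotZ (G i) m < 0 then -G i else G i)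
      (q := fun i => (|dotZ (G i) m|).toNat) hli fun i _ => ?_
    rw [hdot, Int.toNat_of_nonneg (abs_nonneg _)]

theorem presVec_inl (l : ℕ) (p : ℕ → ℕ) (v : ℕ → Fin d → ℤ) (a : Fin l) :
    presVec d l p v (toLex (Sum.inl a)) = p a := rfl

theorem IsOptPres.le_abs_dotZ (hκN : 1 < κ * N) {m : Fin d → ℤ} {p : ℕ → ℕ}
    {v : ℕ → Fin d → ℤ} (hm : IsOptPres d d κ N {m} p v) {j : ℕ} (hj : j < d)
    {u : Fin d → ℤ} (hu : inBall d κ N u)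
    (hspan : castVec u ∉ span ℝ (range fun i : Fin j => castVec (v i))) :
    (p j : ℤ) ≤ |dotZ u m| := by
  -- otherwise `u` in place of `vⱼ`, completed by unit vectors, gives a smaller presentation
  by_contra! hlt
  have hli : LinearIndependent ℝ fun i : Fin (j + 1) => castVec (Function.update v j u i) := by
    simp only [Function.apply_update (fun _ => castVec)]
    exact linearIndependent_update_of_notMem_span (f := fun i => castVec (v i))
      (hm.isPresOf.linearIndependent.fin_prefix (f := fun i => castVec (v i)) hj.le) hspan
  obtain ⟨G, hGv, hGsingle, hG⟩ := exists_extension_by_single hj hli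
  have hGj : G j = u := by simp [hGv j j.lt_succ_self]
  have hGlt : ∀ i < j, G i = v i := fun i hi => by simp [hGv i (by omega), hi.ne]
  have hball : ∀ i < d, inBall d κ N (G i) := by
    intro i hi
    rcases lt_trichotomy i j with hij | rfl | hji
    · rw [hGlt i hij]; exact hm.isPresOf.1 i hi
    · rwa [hGj]
    · obtain ⟨k, hk⟩ := hGsingle i hji hi
      rw [hk]; exact inBall_single hκN k
  refine not_eq_or_slex_of_abs_lt (i := toLex (Sum.inl ⟨j, hj⟩)) ?_ ?_
    (hm.2 _ _ (isPresOf_singleton hball hG m))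
  · intro k hk
    obtain ⟨a, rfl⟩ | ⟨b, rfl⟩ : (∃ a, k = toLex (Sum.inl a)) ∨ ∃ b, k = toLex (Sum.inr b) := by
      rcases k with a | b
      exacts [Or.inl ⟨a, rfl⟩, Or.inr ⟨b, rfl⟩]
    · have ha : a < ⟨j, hj⟩ := Sum.Lex.inl_lt_inl_iff.1 hk
      rw [presVec_inl, presVec_inl, hGlt a ha, hm.isPresOf.dotZ_eq rfl a a.2,
        abs_of_nonneg (by simp), Int.toNat_natCast]
    · exact absurd hk Sum.lex_inr_inl
  · rwa [presVec_inl, presVec_inl, hGj, Int.toNat_of_nonneg (abs_nonneg _), abs_abs,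
      abs_of_nonneg (Int.natCast_nonneg _)]

theorem IsOptPres.monotone (hκN : 1 < κ * N) {m : Fin d → ℤ} {p : ℕ → ℕ}
    {v : ℕ → Fin d → ℤ} (hm : IsOptPres d d κ N {m} p v) {i j : ℕ} (hij : i ≤ j)
    (hj : j < d) : p i ≤ p j := by
  have := hm.le_abs_dotZ hκN (hij.trans_lt hj) (hm.isPresOf.1 j hj)
    (hm.isPresOf.linearIndependent.notMem_span_prefix (f := fun i => castVec (v i)) hj hij)
  rw [hm.isPresOf.dotZ_eq rfl j hj, abs_of_nonneg (by simp)] at this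
  exact_mod_cast this

def prefixEmb {ℓ : ℕ} (h : ℓ ≤ d) : Fin ℓ ⊕ₗ (Fin ℓ ×ₗ Fin d) → Fin d ⊕ₗ (Fin d ×ₗ Fin d) :=
  toLex ∘ Sum.map (Fin.castLE h) (toLex ∘ Prod.map (Fin.castLE h) id ∘ ofLex) ∘ ofLex

theorem prefixEmb_strictMono {ℓ : ℕ} (h : ℓ ≤ d) : StrictMono (prefixEmb h) :=
  Sum.Lex.strictMono_map (Fin.strictMono_castLE h) (Prod.Lex.strictMono_map_fst
    (Fin.strictMono_castLE h))

theorem presVec_comp_prefixEmb {ℓ : ℕ} (h : ℓ ≤ d) (p : ℕ → ℕ) (v : ℕ → Fin d → ℤ) :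
    presVec d d p v ∘ prefixEmb h = presVec d ℓ p v := by
  funext k
  rcases k with a | b <;> rfl

theorem mem_range_prefixEmb {ℓ : ℕ} (h : ℓ ≤ d) {p q : ℕ → ℕ} {v w : ℕ → Fin d → ℤ}
    (hp : ∀ i, ℓ ≤ i → p i = q i) (hv : ∀ i, ℓ ≤ i → v i = w i) (k : Fin d ⊕ₗ (Fin d ×ₗ Fin d))
    (hk : presVec d d p v k ≠ presVec d d q w k) : k ∈ range (prefixEmb h) := by
  rcases k with a | ⟨a, j⟩
  · by_cases ha : (a : ℕ) < ℓ
    · exact ⟨toLex (Sum.inl ⟨a, ha⟩), rfl⟩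
    · exact absurd (show (p a : ℤ) = q a by rw [hp a (not_lt.1 ha)]) hk
  · by_cases ha : (a : ℕ) < ℓ
    · exact ⟨toLex (Sum.inr (toLex (⟨a, ha⟩, j))), rfl⟩
    · exact absurd (show v a j = w a j by rw [hv a (not_lt.1 ha)]) hk

theorem presVec_congr {ℓ : ℕ} {p q : ℕ → ℕ} {v w : ℕ → Fin d → ℤ} (hp : ∀ i < ℓ, p i = q i)
    (hv : ∀ i < ℓ, v i = w i) : presVec d ℓ p v = presVec d ℓ q w := by
  funext k
  rcases k with a | ⟨a, j⟩
  · exact congrArg Nat.cast (hp a a.2)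
  · exact congrFun (hv a a.2) j

theorem IsPresOf.span_prefix_le {ℓ : ℕ} (hℓ : ℓ ≤ d) {p s : ℕ → ℕ} {v u : ℕ → Fin d → ℤ}
    (hv : LinearIndependent ℝ fun i : Fin ℓ => castVec (v i)) {r : Fin d → ℤ}
    (hr : ∀ i < ℓ, dotZ (v i) r = p i)
    (hs : IsPresOf d ℓ κ N {x | ∀ i < ℓ, dotZ (v i) x = p i} s u) :
    span ℝ (range fun i : Fin ℓ => castVec (v i)) ≤
      span ℝ (range fun i : Fin ℓ => castVec (u i)) := by
  have hmem : ∀ i < ℓ, castVec (u i) ∈ span ℝ (range fun i : Fin ℓ => castVec (v i)) := by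
    intro i hi
    refine castVec_mem_span_of_forall_dotZ_eq_zero hℓ hv fun z hz => ?_
    have hrz := hs.dotZ_eq (x := r + z)
      (fun k hk => by rw [dotZ_add, hz k hk, add_zero, hr k hk]) i hi
    rw [dotZ_add, hs.dotZ_eq hr i hi] at hrz
    omega
  refine (eq_of_le_of_finrank_eq (span_le.2 (range_subset_iff.2 fun i : Fin ℓ => hmem i i.2)) ?_).ge
  rw [finrank_span_eq_card hs.linearIndependent, finrank_span_eq_card hv]

theorem IsOptPres.prefix {r : Fin d → ℤ} {p : ℕ → ℕ} {v : ℕ → Fin d → ℤ}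
    (hr : IsOptPres d d κ N {r} p v) {ℓ : ℕ} (hℓ : ℓ ≤ d) :
    IsOptPres d ℓ κ N {x | ∀ i < ℓ, dotZ (v i) x = p i} p v := by
  have hvli := hr.isPresOf.linearIndependent
  have hvr := hr.isPresOf.dotZ_eq rfl
  have hvli' := hvli.fin_prefix (f := fun i => castVec (v i)) hℓ
  refine ⟨⟨fun i hi => hr.isPresOf.1 i (by omega), hvli', rfl⟩, fun s u hs => ?_⟩
  have hur : ∀ i < ℓ, dotZ (u i) r = s i := hs.dotZ_eq fun i hi => hvr i (by omega)
  let U := fun i => if i < ℓ then u i else v i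
  let S := fun i => if i < ℓ then s i else p i
  have hUli : LinearIndependent ℝ fun i : Fin d => castVec (U i) := by
    simpa only [U, apply_ite castVec] using linearIndependent_ite_of_span_le
      (f := fun i => castVec (v i)) (g := fun i => castVec (u i)) (by simp) hℓ hvli
      (hs.span_prefix_le hℓ hvli' fun i hi => hvr i (by omega))
  have hUr : ∀ i < d, dotZ (U i) r = S i := by
    intro i hi
    by_cases h : i < ℓ <;> simp [U, S, h, hur, hvr i hi]
  have hP : IsPresOf d d κ N {r} S U := by
    refine ⟨fun i hi => ?_, hUli, singleton_eq_setOf_dotZ hUli hUr⟩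
    by_cases h : i < ℓ <;> simp [U, h, hs.1 i, hr.isPresOf.1 i hi]
  have := eq_or_slex_comp (prefixEmb_strictMono hℓ)
    (mem_range_prefixEmb hℓ (fun i hi => by simp [S, not_lt.2 hi])
      (fun i hi => by simp [U, not_lt.2 hi])) (hr.2 S U hP)
  rwa [presVec_comp_prefixEmb, presVec_comp_prefixEmb,
    presVec_congr (fun i hi => if_pos hi) (fun i hi => if_pos hi)] at this

end Presentations

section Perturbation

variable {d : ℕ} {κ N : ℝ} {m r : Fin d → ℤ} {pm pr : ℕ → ℕ} {vm vr : ℕ → Fin d → ℤ} {ℓ : ℕ}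

theorem abs_dotZ_sub_lt (hκN : 1 < κ * N) {v : Fin d → ℤ} (hv : inBall d κ N v)
    {c e : ℝ} (hrm : enormZ (r - m) < κ⁻¹ * c * N ^ (e - 1)) :
    |(dotZ v r : ℝ) - dotZ v m| < c * N ^ e := by
  obtain ⟨hκ, hN⟩ := mul_ne_zero_iff.1 (zero_lt_one.trans hκN).ne'
  calc |(dotZ v r : ℝ) - dotZ v m| = |(dotZ v (r - m) : ℝ)| := by rw [dotZ_sub, Int.cast_sub]
    _ ≤ enormZ v * enormZ (r - m) := abs_dotZ_le v (r - m)
    _ < (κ * N) * (κ⁻¹ * c * N ^ (e - 1)) :=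
      mul_lt_mul'' hv.2 hrm (Real.sqrt_nonneg _) (Real.sqrt_nonneg _)
    _ = c * N ^ e := by rw [Real.rpow_sub_one hN]; field_simp

theorem IsOptPres.lt_add_of_lt (hκN : 1 < κ * N) (hm : IsOptPres d d κ N {m} pm vm)
    (hr : IsOptPres d d κ N {r} pr vr) (hℓ : ℓ ≤ d) {δ : ℝ}
    (hδ : ∀ v, inBall d κ N v → |(dotZ v r : ℝ) - dotZ v m| < δ) {A : ℝ}
    (hA : ∀ i < ℓ, (pm i : ℝ) < A) : ∀ i < ℓ, (pr i : ℝ) < A + δ := by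
  intro i hi
  obtain ⟨k, hk⟩ := exists_notMem_span_of_lt (g := fun i => castVec (vr i)) (k := i)
    (hm.isPresOf.linearIndependent.fin_prefix (f := fun i => castVec (vm i)) hℓ)
    (by rwa [Fintype.card_fin])
  have hkd : (k : ℕ) < d := k.2.trans_le hℓ
  have hle : (pr i : ℝ) ≤ |(dotZ (vm k) r : ℝ)| := by
    exact_mod_cast hr.le_abs_dotZ hκN (hi.trans_le hℓ) (hm.isPresOf.1 k hkd) hk
  have hpm : |(dotZ (vm k) m : ℝ)| = pm k := by
    rw [hm.isPresOf.dotZ_eq rfl k hkd]; simp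
  have := abs_sub_abs_le_abs_sub (dotZ (vm k) r : ℝ) (dotZ (vm k) m)
  linarith [hδ _ (hm.isPresOf.1 k hkd), hA k k.2]

theorem IsOptPres.sub_lt_abs_dotZ (hκN : 1 < κ * N) (hm : IsOptPres d d κ N {m} pm vm)
    (hℓ : ℓ < d) {δ : ℝ} (hδ : ∀ v, inBall d κ N v → |(dotZ v r : ℝ) - dotZ v m| < δ) {B : ℝ}
    (hB : B < pm ℓ) {u : Fin d → ℤ} (hu : inBall d κ N u)
    (hus : castVec u ∉ span ℝ (range fun i : Fin ℓ => castVec (vm i))) :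
    B - δ < |(dotZ u r : ℝ)| := by
  have hle : (pm ℓ : ℝ) ≤ |(dotZ u m : ℝ)| := by exact_mod_cast hm.le_abs_dotZ hκN hℓ hu hus
  have := abs_sub_abs_le_abs_sub (dotZ u m : ℝ) (dotZ u r)
  rw [abs_sub_comm] at this
  linarith [hδ u hu]

theorem span_prefix_eq_of_gap (hr : IsOptPres d d κ N {r} pr vr)
    (hvm : LinearIndependent ℝ fun i : Fin d => castVec (vm i)) (hℓ : ℓ ≤ d) {C : ℝ} (hlow : ∀ i < ℓ, (pr i : ℝ) < C)
    (hhigh : ℓ < d → ∀ u, inBall d κ N u →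
      castVec u ∉ span ℝ (range fun i : Fin ℓ => castVec (vm i)) → C ≤ |(dotZ u r : ℝ)|) :
    span ℝ (range fun i : Fin ℓ => castVec (vr i)) =
      span ℝ (range fun i : Fin ℓ => castVec (vm i)) := by
  have hle : span ℝ (range fun i : Fin ℓ => castVec (vr i)) ≤
      span ℝ (range fun i : Fin ℓ => castVec (vm i)) := by
    refine span_le.2 (range_subset_iff.2 fun i => ?_)
    by_contra hi
    rcases hℓ.lt_or_eq with hℓd | rfl
    · have := hhigh hℓd (vr i) (hr.isPresOf.1 i (by omega)) hi
      rw [hr.isPresOf.dotZ_eq rfl i (by omega)] at this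
      linarith [hlow i i.2, show |((pr i : ℤ) : ℝ)| = pr i by simp]
    · exact hi (by rw [hvm.span_eq_top_of_card_eq_finrank' (by simp)]; trivial)
  refine eq_of_le_of_finrank_eq hle ?_
  rw [finrank_span_eq_card (hvm.fin_prefix (f := fun i => castVec (vm i)) hℓ),
    finrank_span_eq_card
      (hr.isPresOf.linearIndependent.fin_prefix (f := fun i => castVec (vr i)) hℓ)]

theorem IsOptPres.cut_transfer (hκN : 1 < κ * N) (hm : IsOptPres d d κ N {m} pm vm)
    (hr : IsOptPres d d κ N {r} pr vr) (hℓ : ℓ ≤ d) {A B δ ε : ℝ} (hAB : A + δ ≤ B - ε)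
    (hδ : ∀ v, inBall d κ N v → |(dotZ v r : ℝ) - dotZ v m| < δ)
    (hε : ∀ v, inBall d κ N v → |(dotZ v r : ℝ) - dotZ v m| < ε)
    (hlow : ℓ = 0 ∨ (pm (ℓ - 1) : ℝ) < A) (hhigh : ℓ = d ∨ B < pm ℓ) :
    ((ℓ = 0 ∨ (pr (ℓ - 1) : ℝ) < A + δ) ∧ (ℓ = d ∨ B - ε < pr ℓ)) ∧
      span ℝ (range fun i : Fin ℓ => castVec (vr i)) =
        span ℝ (range fun i : Fin ℓ => castVec (vm i)) := by
  have hA : ∀ i < ℓ, (pm i : ℝ) < A := fun i hi =>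
    lt_of_le_of_lt (by exact_mod_cast hm.monotone hκN (Nat.le_sub_one_of_lt hi) (by omega))
      (hlow.resolve_left (by omega))
  have hrlow := hm.lt_add_of_lt hκN hr hℓ hδ hA
  have hrhigh : ℓ < d → ∀ u, inBall d κ N u →
      castVec u ∉ span ℝ (range fun i : Fin ℓ => castVec (vm i)) → B - ε < |(dotZ u r : ℝ)| :=
    fun hℓd _ hu hus => hm.sub_lt_abs_dotZ hκN hℓd hε (hhigh.resolve_left hℓd.ne) hu hus
  have hspan := span_prefix_eq_of_gap hr hm.isPresOf.linearIndependent hℓ hrlow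
    fun hℓd u hu hus => hAB.trans (hrhigh hℓd u hu hus).le
  refine ⟨⟨?_, ?_⟩, hspan⟩
  · rcases Nat.eq_zero_or_pos ℓ with h | h
    exacts [Or.inl h, Or.inr (hrlow (ℓ - 1) (by omega))]
  · rcases hℓ.eq_or_lt with h | h
    · exact Or.inl h
    · have := hrhigh h (vr ℓ) (hr.isPresOf.1 ℓ h) (by
        rw [← hspan]
        exact hr.isPresOf.linearIndependent.notMem_span_prefix (f := fun i => castVec (vr i))
          h le_rfl)
      rw [hr.isPresOf.dotZ_eq rfl ℓ h, Int.cast_natCast, abs_of_nonneg (by positivity)] at this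
      exact Or.inr this

end Perturbation

section Allowable

variable {d n : ℕ} {κ τ0 τ1 cc CC N0 N θ μ τ : ℝ}

theorem Allowable.lt_cc_mul (h : Allowable d n κ τ0 τ1 cc CC N0 N θ μ τ) : CC < cc * N := by
  obtain ⟨-, -, hcc, -, hCC, rfl, hκ, -, -, -, -, -, -, hN⟩ := h
  have hfact : (1 : ℝ) ≤ (d + 1).factorial := by exact_mod_cast (d + 1).factorial_pos
  have hN0 : CC / cc ≤ (d + 1).factorial * κ ^ (d + 1) * CC / cc := by
    rw [mul_div_assoc]
    exact le_mul_of_one_le_left (div_nonneg (by linarith) hcc.le)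
      (one_le_mul_of_one_le_of_one_le hfact (one_le_pow₀ hκ))
  rw [mul_comm, ← div_lt_iff₀ hcc]
  exact hN0.trans_lt hN

theorem Allowable.one_lt_mul (h : Allowable d n κ τ0 τ1 cc CC N0 N θ μ τ) : 1 < κ * N := by
  have hCN := h.lt_cc_mul
  obtain ⟨-, -, hcc, hcc2, hCC, -, hκ, -⟩ := h
  nlinarith

theorem Allowable.mul_rpow_le (h : Allowable d n κ τ0 τ1 cc CC N0 N θ μ τ) :
    μ * N ^ τ ≤ θ * N ^ (4 * (d : ℝ) * τ) := by
  have hCN := h.lt_cc_mul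
  obtain ⟨hτ0, -, hcc, hcc2, hCC, -, -, hτ0τ, hττ1, hccθ, -, -, hμCC, -⟩ := h
  have hτ : 12 < τ := (le_max_right _ _).trans_lt hτ0 |>.trans_le hτ0τ
  have hd : (1 : ℝ) ≤ d := by
    rcases Nat.eq_zero_or_pos d with hd | hd
    · simp [hd] at hττ1; linarith
    · exact_mod_cast hd
  have hN : 1 ≤ N := by nlinarith
  have hexp : N ^ τ * N ≤ N ^ (4 * (d : ℝ) * τ) := by
    rw [← Real.rpow_add_one (by linarith)]
    exact Real.rpow_le_rpow_of_exponent_le hN (by nlinarith)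
  have hNτ : 0 < N ^ τ := Real.rpow_pos_of_pos (by linarith) τ
  calc μ * N ^ τ ≤ θ * N * N ^ τ := by gcongr; nlinarith
    _ = θ * (N ^ τ * N) := by ring
    _ ≤ θ * N ^ (4 * (d : ℝ) * τ) := by gcongr; linarith

end Allowable

theorem statement14_general (d n : ℕ) (κ τ0 τ1 cc CC N0 N θ θ' μ μ' τ : ℝ)
    (hall : Allowable d n κ τ0 τ1 cc CC N0 N θ μ τ)
    (m r : Fin d → ℤ)
    (pm : ℕ → ℕ) (vm : ℕ → Fin d → ℤ) (pr : ℕ → ℕ) (vr : ℕ → Fin d → ℤ)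
    (hm : IsOptPres d d κ N {m} pm vm)
    (hr : IsOptPres d d κ N {r} pr vr)
    (ℓ : ℕ) (hcut : HasCutAt d N θ' μ' τ pm ℓ)
    (hdist : enormZ (r - m) <
      min (κ⁻¹ * (μ - μ') * N ^ (τ - 1))
        (κ⁻¹ * (θ' - θ) * N ^ (4 * (d : ℝ) * τ - 1))) :
    HasCutAt d N θ μ τ pr ℓ ∧
    Submodule.span ℝ (Set.range fun i : Fin ℓ => fun j => ((vr i.1 j : ℝ)))
      = Submodule.span ℝ (Set.range fun i : Fin ℓ => fun j => ((vm i.1 j : ℝ))) ∧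
    IsOptPres d ℓ κ N
      ((fun x => x + (r - m)) '' {x | ∀ i < ℓ, dotZ (vm i) x = (pm i : ℤ)}) pr vr := by
  have hκN := hall.one_lt_mul
  have hμ : μ' * N ^ τ + (μ - μ') * N ^ τ = μ * N ^ τ := by ring
  have hθ : θ' * N ^ (4 * (d : ℝ) * τ) - (θ' - θ) * N ^ (4 * (d : ℝ) * τ) =
      θ * N ^ (4 * (d : ℝ) * τ) := by ring
  obtain ⟨hℓ, hlow, hhigh⟩ := hcut
  obtain ⟨⟨hrlow, hrhigh⟩, hspan⟩ := hm.cut_transfer hκN hr hℓ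
    (by rw [hμ, hθ]; exact hall.mul_rpow_le)
    (fun _ hv => abs_dotZ_sub_lt hκN hv (hdist.trans_le (min_le_left _ _)))
    (fun _ hv => abs_dotZ_sub_lt hκN hv (hdist.trans_le (min_le_right _ _))) hlow hhigh
  rw [hμ] at hrlow
  rw [hθ] at hrhigh
  refine ⟨⟨hℓ, hrlow, hrhigh⟩, hspan, ?_⟩
  rw [image_add_sub_setOf_dotZ hspan (fun i hi => hm.isPresOf.dotZ_eq rfl i (by omega))
    (fun i hi => hr.isPresOf.dotZ_eq rfl i (by omega))]
  exact hr.prefix hℓ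

/-- neighborhood lemma: if `m` has a cut at `ℓ` for parameters
`(N, θ', μ', τ)` and `r` is close enough to `m`, then `r` has a cut at the same `ℓ`
for the less restrictive allowable parameters `(N, θ, μ, τ)`, the spans of the first
`ℓ` vectors of the two optimal presentations coincide, and `[w;q]_ℓ` is the
`N`-optimal presentation of the translated subspace `[v;p]_ℓ + (r - m)`. -/
theorem statement14 (d n : ℕ) (κ τ0 τ1 cc CC N0 N θ θ' μ μ' τ : ℝ)
    (hall : Allowable d n κ τ0 τ1 cc CC N0 N θ μ τ)
    (hall' : Allowable d n κ τ0 τ1 cc CC N0 N θ' μ' τ)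
    (hθ : θ < θ') (hμ : μ' < μ)
    (m r : Fin d → ℤ)
    (pm : ℕ → ℕ) (vm : ℕ → Fin d → ℤ) (pr : ℕ → ℕ) (vr : ℕ → Fin d → ℤ)
    (hm : IsOptPres d d κ N {m} pm vm)
    (hr : IsOptPres d d κ N {r} pr vr)
    (ℓ : ℕ) (hcut : HasCutAt d N θ' μ' τ pm ℓ)
    (hdist : enormZ (r - m) <
      min (κ⁻¹ * (μ - μ') * N ^ (τ - 1))
        (κ⁻¹ * (θ' - θ) * N ^ (4 * (d : ℝ) * τ - 1))) :
    HasCutAt d N θ μ τ pr ℓ ∧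
    Submodule.span ℝ (Set.range fun i : Fin ℓ => fun j => ((vr i.1 j : ℝ)))
      = Submodule.span ℝ (Set.range fun i : Fin ℓ => fun j => ((vm i.1 j : ℝ))) ∧
    IsOptPres d ℓ κ N
      ((fun x => x + (r - m)) '' {x | ∀ i < ℓ, dotZ (vm i) x = (pm i : ℤ)}) pr vr :=
  statement14_general d n κ τ0 τ1 cc CC N0 N θ θ' μ μ' τ hall m r pm vm pr vr hm hr ℓ hcut hdist
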